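/- Let b1, b2 be binary vectors of length n, let k = #{i : (b1)_i = 1 and (b2)_i = 0} and l = #{i : (b1)_i = 0 and (b2)_i = 1}, and suppose k ≥ l. Then in ℤ[q,q^{−1}]: ∑_{i : (b1)_i = 1, (b2)_i = 0} (−q)^{flex_{b1,b2}(i)} − ∑_{i : (b1)_i = 0, (b2)_i = 1} (−q)^{flex_{b1,b2}(i)} = ∑_{j=1}^{k−l} (−q)^{(k−l)+1−2j}. (This identity is the algebraic content of the square-switch relation on Fontaine web vectors: the right-hand side is the quantum integer [k−l] evaluated at −q.) -/

import Mathlib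

/-- `flex_{b1,b2}(i)` for binary vectors `b1, b2` of length `n`. -/
def flexp (n : ℕ) (b1 b2 : ℕ → ℤ) (i : ℕ) : ℤ :=
  (((Finset.Icc 1 n).filter (fun j => j < i ∧ b1 j = 1 ∧ b2 j = 0)).card : ℤ)
    - (((Finset.Icc 1 n).filter (fun j => j < i ∧ b1 j = 0 ∧ b2 j = 1)).card : ℤ)
    - (((Finset.Icc 1 n).filter (fun j => i < j ∧ b1 j = 1 ∧ b2 j = 0)).card : ℤ)
    + (((Finset.Icc 1 n).filter (fun j => i < j ∧ b1 j = 0 ∧ b2 j = 1)).card : ℤ)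

/-- `(−q)^m = (−1)^m q^m` in the Laurent polynomial ring `ℤ[q,q⁻¹]`. -/
noncomputable def negqpow (m : ℤ) : LaurentPolynomial ℤ :=
  ((((-1 : ℤˣ) ^ m : ℤˣ) : ℤ) : LaurentPolynomial ℤ) * LaurentPolynomial.T m

/-!
Write `x = -q`, and let `S`, `T` be the positions `i` with `(b1 i, b2 i) = (1, 0)`, resp.
`(0, 1)`, and `D = #S - #T`, among the first `n` positions. Appending position `n + 1` multiplies
every earlier term `x ^ flex(i)` by `x⁻¹` or `x` (as the new position lies in `S` or `T`) and,
since the new position has flex `D`, adds `x ^ D` resp. `-x ^ D`. The quantum integers obey the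
same recursion, `[m + 1] = x⁻¹ [m] + x ^ m` and `[m - 1] = x [m] - x ^ m`, so by induction on `n`
the left-hand side is `[D]` whatever the sign of `D`; for `D = k - l ≥ 0` this is the stated sum.
-/

open Finset

section QuantumInteger

variable {R : Type*} [CommRing R] (ψ : AddChar ℤ R)

def quantumNat (p : ℕ) : R := ∑ j ∈ range p, ψ ((p : ℤ) - 1 - 2 * j)

def quantumInt (m : ℤ) : R :=
  match m with
  | Int.ofNat p => quantumNat ψ p
  | Int.negSucc p => -quantumNat ψ (p + 1)

@[simp] lemma quantumInt_natCast (p : ℕ) : quantumInt ψ p = quantumNat ψ p := rfl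

@[simp] lemma quantumInt_zero : quantumInt ψ 0 = 0 := quantumInt_natCast ψ 0 ▸ sum_range_zero _

lemma quantumInt_neg (m : ℤ) : quantumInt ψ (-m) = -quantumInt ψ m := by
  rcases m with (_ | p) | p
  · simp [quantumInt, quantumNat]
  · rfl
  · rw [Int.neg_negSucc]
    simp [quantumInt]

lemma quantumNat_succ (p : ℕ) : quantumNat ψ (p + 1) = ψ (-1) * quantumNat ψ p + ψ p := by
  simp only [quantumNat, sum_range_succ', mul_sum, ← AddChar.map_add_eq_mul]
  push_cast
  congr 1 <;> [exact sum_congr rfl fun j _ => congrArg ψ (by ring); exact congrArg ψ (by ring)]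

lemma quantumNat_succ' (p : ℕ) : quantumNat ψ (p + 1) = ψ 1 * quantumNat ψ p + ψ (-p) := by
  simp only [quantumNat, sum_range_succ, mul_sum, ← AddChar.map_add_eq_mul]
  push_cast
  congr 1 <;> [exact sum_congr rfl fun j _ => congrArg ψ (by ring); exact congrArg ψ (by ring)]

lemma quantumNat_eq_sum_Icc (p : ℕ) :
    quantumNat ψ p = ∑ j ∈ Icc 1 p, ψ ((p : ℤ) + 1 - 2 * j) := by
  rw [← Ico_add_one_right_eq_Icc, sum_Ico_eq_sum_range, Nat.add_sub_cancel, quantumNat]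
  exact sum_congr rfl fun j _ => congrArg ψ (by push_cast; ring)

lemma quantumInt_add_one (m : ℤ) : quantumInt ψ (m + 1) = ψ (-1) * quantumInt ψ m + ψ m := by
  obtain ⟨p, rfl | rfl⟩ := Int.eq_nat_or_neg m
  · exact_mod_cast quantumNat_succ ψ p
  cases p with
  | zero => exact_mod_cast quantumNat_succ ψ 0
  | succ p =>
    have h1 : ψ (-1) * ψ 1 = 1 := by rw [← AddChar.map_add_eq_mul]; simp
    have h2 : ψ (-1) * ψ (-p) = ψ (-(p + 1 : ℕ)) := by
      rw [← AddChar.map_add_eq_mul]; push_cast; ring_nf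
    rw [show -((p + 1 : ℕ) : ℤ) + 1 = -p by push_cast; ring, quantumInt_neg, quantumInt_neg,
      quantumInt_natCast, quantumInt_natCast, quantumNat_succ']
    linear_combination quantumNat ψ p * h1 + h2

lemma quantumInt_sub_one (m : ℤ) : quantumInt ψ (m - 1) = ψ 1 * quantumInt ψ m - ψ m := by
  have h1 : ψ 1 * ψ (-1) = 1 := by rw [← AddChar.map_add_eq_mul]; simp
  have h2 : ψ 1 * ψ (m - 1) = ψ m := by rw [← AddChar.map_add_eq_mul]; ring_nf
  rw [← sub_add_cancel m 1, quantumInt_add_one, sub_add_cancel]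
  linear_combination -(quantumInt ψ (m - 1)) * h1 - h2

end QuantumInteger

lemma card_filter_Icc_succ (n : ℕ) (P : ℕ → Prop) [DecidablePred P] :
    ((Icc 1 (n + 1)).filter P).card = ((Icc 1 n).filter P).card + if P (n + 1) then 1 else 0 := by
  rw [← insert_Icc_right_eq_Icc_add_one (by omega), filter_insert]
  split_ifs
  · rw [card_insert_of_notMem (by simp)]
  · simp

section Flex

variable (b1 b2 : ℕ → ℤ) {n : ℕ}

lemma flexp_succ_of_le {i : ℕ} (hi : i ≤ n) :
    flexp (n + 1) b1 b2 i = flexp n b1 b2 i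
      - (if b1 (n + 1) = 1 ∧ b2 (n + 1) = 0 then 1 else 0)
      + (if b1 (n + 1) = 0 ∧ b2 (n + 1) = 1 then 1 else 0) := by
  have h1 : ¬ n + 1 < i := by omega
  have h2 : i < n + 1 := by omega
  simp only [flexp, card_filter_Icc_succ, h1, h2, false_and, true_and, if_false]
  split_ifs <;> push_cast <;> ring

lemma flexp_succ_self :
    flexp (n + 1) b1 b2 (n + 1)
      = (((Icc 1 n).filter (fun j => b1 j = 1 ∧ b2 j = 0)).card : ℤ)
        - ((Icc 1 n).filter (fun j => b1 j = 0 ∧ b2 j = 1)).card := by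
  have below (P : ℕ → Prop) [DecidablePred P] :
      (Icc 1 (n + 1)).filter (fun j => j < n + 1 ∧ P j) = (Icc 1 n).filter P := by
    ext j; simp only [mem_filter, mem_Icc]; grind
  have above (P : ℕ → Prop) [DecidablePred P] :
      (Icc 1 (n + 1)).filter (fun j => n + 1 < j ∧ P j) = ∅ :=
    filter_false_of_mem fun j hj h => by have := (mem_Icc.1 hj).2; omega
  simp only [flexp, below, above, card_empty]
  ring

variable {R : Type*} [CommRing R] (ψ : AddChar ℤ R)

lemma sum_filter_Icc_succ_flexp (P : ℕ → Prop) [DecidablePred P] (c : ℤ)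
    (hc : ∀ i ≤ n, flexp (n + 1) b1 b2 i = flexp n b1 b2 i + c) :
    ∑ i ∈ (Icc 1 (n + 1)).filter P, ψ (flexp (n + 1) b1 b2 i)
      = ψ c * ∑ i ∈ (Icc 1 n).filter P, ψ (flexp n b1 b2 i)
        + if P (n + 1) then ψ (flexp (n + 1) b1 b2 (n + 1)) else 0 := by
  have shift : ∑ i ∈ (Icc 1 n).filter P, ψ (flexp (n + 1) b1 b2 i)
      = ψ c * ∑ i ∈ (Icc 1 n).filter P, ψ (flexp n b1 b2 i) := by
    rw [mul_sum]
    refine sum_congr rfl fun i hi => ?_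
    rw [hc i (mem_Icc.1 (mem_filter.1 hi).1).2, AddChar.map_add_eq_mul, mul_comm]
  rw [← insert_Icc_right_eq_Icc_add_one (by omega), filter_insert]
  split_ifs
  · rw [sum_insert (by simp), shift, add_comm]
  · rw [shift, add_zero]

theorem sum_sub_sum_flexp_eq_quantumInt (n : ℕ) :
    ∑ i ∈ (Icc 1 n).filter (fun i => b1 i = 1 ∧ b2 i = 0), ψ (flexp n b1 b2 i)
      - ∑ i ∈ (Icc 1 n).filter (fun i => b1 i = 0 ∧ b2 i = 1), ψ (flexp n b1 b2 i)
      = quantumInt ψ (((Icc 1 n).filter (fun i => b1 i = 1 ∧ b2 i = 0)).card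
          - ((Icc 1 n).filter (fun i => b1 i = 0 ∧ b2 i = 1)).card) := by
  induction n with
  | zero => simp
  | succ n ih =>
    by_cases hS : b1 (n + 1) = 1 ∧ b2 (n + 1) = 0
    · have hT : ¬(b1 (n + 1) = 0 ∧ b2 (n + 1) = 1) := fun hT => by simp [hT.1] at hS
      have hc : ∀ i ≤ n, flexp (n + 1) b1 b2 i = flexp n b1 b2 i + -1 := fun i hi => by
        rw [flexp_succ_of_le b1 b2 hi, if_pos hS, if_neg hT]; ring
      simp only [sum_filter_Icc_succ_flexp b1 b2 ψ _ _ hc, card_filter_Icc_succ, if_pos hS,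
        if_neg hT, flexp_succ_self]
      push_cast
      rw [show ∀ K L : ℤ, K + 1 - (L + 0) = K - L + 1 from fun _ _ => by ring,
        quantumInt_add_one, ← ih]
      ring
    by_cases hT : b1 (n + 1) = 0 ∧ b2 (n + 1) = 1
    · have hc : ∀ i ≤ n, flexp (n + 1) b1 b2 i = flexp n b1 b2 i + 1 := fun i hi => by
        rw [flexp_succ_of_le b1 b2 hi, if_neg hS, if_pos hT]; ring
      simp only [sum_filter_Icc_succ_flexp b1 b2 ψ _ _ hc, card_filter_Icc_succ, if_neg hS,
        if_pos hT, flexp_succ_self]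
      push_cast
      rw [show ∀ K L : ℤ, K + 0 - (L + 1) = K - L - 1 from fun _ _ => by ring,
        quantumInt_sub_one, ← ih]
      ring
    · have hc : ∀ i ≤ n, flexp (n + 1) b1 b2 i = flexp n b1 b2 i + 0 := fun i hi => by
        rw [flexp_succ_of_le b1 b2 hi, if_neg hS, if_neg hT]; ring
      simp only [sum_filter_Icc_succ_flexp b1 b2 ψ _ _ hc, card_filter_Icc_succ, if_neg hS,
        if_neg hT, AddChar.map_zero_eq_one, one_mul, add_zero]
      exact ih

end Flex

noncomputable def negqpowChar : AddChar ℤ (LaurentPolynomial ℤ) where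
  toFun := negqpow
  map_zero_eq_one' := by simp [negqpow]
  map_add_eq_mul' a b := by
    simp only [negqpow, zpow_add, LaurentPolynomial.T_add, Units.val_mul, Int.cast_mul]
    ring

theorem square_switch_sum_general (n k l : ℕ) (b1 b2 : ℕ → ℤ)
    (hk : ((Finset.Icc 1 n).filter (fun i => b1 i = 1 ∧ b2 i = 0)).card = k)
    (hl : ((Finset.Icc 1 n).filter (fun i => b1 i = 0 ∧ b2 i = 1)).card = l)
    (hkl : l ≤ k) :
    (∑ i ∈ (Finset.Icc 1 n).filter (fun i => b1 i = 1 ∧ b2 i = 0),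
        negqpow (flexp n b1 b2 i))
      - (∑ i ∈ (Finset.Icc 1 n).filter (fun i => b1 i = 0 ∧ b2 i = 1),
          negqpow (flexp n b1 b2 i))
      = ∑ j ∈ Finset.Icc 1 (k - l), negqpow ((k : ℤ) - l + 1 - 2 * j) := by
  have h := sum_sub_sum_flexp_eq_quantumInt b1 b2 negqpowChar n
  rwa [hk, hl, ← Nat.cast_sub hkl, quantumInt_natCast, quantumNat_eq_sum_Icc,
    Nat.cast_sub hkl] at h

/-- **Algebraic content of the square-switch relation.**  For binary vectors `b1, b2`
of length `n` with `k = #{i : (b1)_i = 1, (b2)_i = 0} ≥ l = #{i : (b1)_i = 0, (b2)_i = 1}`,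
`∑_{(b1)_i=1,(b2)_i=0} (−q)^{flex(i)} − ∑_{(b1)_i=0,(b2)_i=1} (−q)^{flex(i)}
  = ∑_{j=1}^{k−l} (−q)^{(k−l)+1−2j}` in `ℤ[q,q⁻¹]`. -/
theorem square_switch_sum (n k l : ℕ) (b1 b2 : ℕ → ℤ)
    (hb1 : ∀ i ∈ Finset.Icc 1 n, b1 i = 0 ∨ b1 i = 1)
    (hb2 : ∀ i ∈ Finset.Icc 1 n, b2 i = 0 ∨ b2 i = 1)
    (hk : ((Finset.Icc 1 n).filter (fun i => b1 i = 1 ∧ b2 i = 0)).card = k)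
    (hl : ((Finset.Icc 1 n).filter (fun i => b1 i = 0 ∧ b2 i = 1)).card = l)
    (hkl : l ≤ k) :
    (∑ i ∈ (Finset.Icc 1 n).filter (fun i => b1 i = 1 ∧ b2 i = 0),
        negqpow (flexp n b1 b2 i))
      - (∑ i ∈ (Finset.Icc 1 n).filter (fun i => b1 i = 0 ∧ b2 i = 1),
          negqpow (flexp n b1 b2 i))
      = ∑ j ∈ Finset.Icc 1 (k - l), negqpow ((k : ℤ) - l + 1 - 2 * j) :=
  square_switch_sum_general n k l b1 b2 hk hl hkl
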